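/- arXiv:math/0108055 — 2 statements merged into one kernel-verified Lean document; each statement's English description precedes it below -/
import Mathlib

section
/- If C is an effect on a Hilbert space H with C ≤ E and C ≤ F, where E and F are rank-one effects with distinct one-dimensional ranges, then C = 0. -/
/-!
A positive operator `C ≤ T` has `⟪C x, x⟫ = 0`, hence `C x = 0`, for every `x ⟂ range T`; since `C`
is self-adjoint this forces `range C ≤ range T` when `range T` is closed. So the range of `C` lies
in two distinct lines, which meet only in `0`.
-/

variable {H : Type*} [NormedAddCommGroup H] [InnerProductSpace ℂ H] [CompleteSpace H]

/-- An effect on a Hilbert space: a positive operator bounded above by the identity. -/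
def IsEffect (A : H →L[ℂ] H) : Prop := A.IsPositive ∧ (1 - A).IsPositive

open scoped InnerProductSpace ComplexOrder

namespace ContinuousLinearMap

-- Writing `T = S† S`, the vanishing of `⟪T x, x⟫ = ‖S x‖²` gives `S x = 0`.
lemma IsPositive.apply_eq_zero_of_inner_self_eq_zero {T : H →L[ℂ] H} (hT : T.IsPositive)
    {x : H} (hx : ⟪T x, x⟫_ℂ = 0) : T x = 0 := by
  obtain ⟨S, rfl⟩ :=
    CStarAlgebra.nonneg_iff_eq_star_mul_self.mp ((nonneg_iff_isPositive T).mpr hT)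
  rw [mul_apply_eq_comp, star_eq_adjoint, adjoint_inner_left, inner_self_eq_zero] at hx
  simp [hx]

lemma IsPositive.orthogonal_range_le_ker_of_le {C T : H →L[ℂ] H} (hC : C.IsPositive)
    (hCT : C ≤ T) :
    (LinearMap.range (T : H →ₗ[ℂ] H))ᗮ ≤ LinearMap.ker (C : H →ₗ[ℂ] H) := by
  intro x hx
  have hTx : ⟪T x, x⟫_ℂ = 0 :=
    Submodule.inner_right_of_mem_orthogonal (LinearMap.mem_range_self (T : H →ₗ[ℂ] H) x) hx
  have hCT_x := hCT.inner_nonneg_left x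
  rw [sub_apply, inner_sub_left, hTx, zero_sub, neg_nonneg] at hCT_x
  exact hC.apply_eq_zero_of_inner_self_eq_zero (le_antisymm hCT_x (hC.inner_nonneg_left x))

lemma IsPositive.range_le_range_of_le {C T : H →L[ℂ] H} (hC : C.IsPositive) (hCT : C ≤ T)
    [(LinearMap.range (T : H →ₗ[ℂ] H)).HasOrthogonalProjection] :
    LinearMap.range (C : H →ₗ[ℂ] H) ≤ LinearMap.range (T : H →ₗ[ℂ] H) :=
  calc LinearMap.range (C : H →ₗ[ℂ] H)
      ≤ (LinearMap.range (C : H →ₗ[ℂ] H))ᗮᗮ := Submodule.le_orthogonal_orthogonal _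
    _ = (LinearMap.ker (C : H →ₗ[ℂ] H))ᗮ := by rw [hC.isSymmetric.orthogonal_range]
    _ ≤ (LinearMap.range (T : H →ₗ[ℂ] H))ᗮᗮ :=
        Submodule.orthogonal_le (hC.orthogonal_range_le_ker_of_le hCT)
    _ = LinearMap.range (T : H →ₗ[ℂ] H) := Submodule.orthogonal_orthogonal _

end ContinuousLinearMap

theorem effect_le_two_rankOne_eq_zero_general (C E F : H →L[ℂ] H)
    (hC : IsEffect C)
    (hCE : (E - C).IsPositive) (hCF : (F - C).IsPositive)
    (hrE : Module.finrank ℂ (LinearMap.range (E : H →ₗ[ℂ] H)) = 1)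
    (hrF : Module.finrank ℂ (LinearMap.range (F : H →ₗ[ℂ] H)) = 1)
    (hne : LinearMap.range (E : H →ₗ[ℂ] H) ≠ LinearMap.range (F : H →ₗ[ℂ] H)) :
    C = 0 := by
  have : FiniteDimensional ℂ (LinearMap.range (E : H →ₗ[ℂ] H)) := .of_finrank_eq_succ hrE
  have : FiniteDimensional ℂ (LinearMap.range (F : H →ₗ[ℂ] H)) := .of_finrank_eq_succ hrF
  have hEF : Disjoint (LinearMap.range (E : H →ₗ[ℂ] H)) (LinearMap.range (F : H →ₗ[ℂ] H)) :=
    (Submodule.isAtom_iff_finrank_eq_one.mpr hrE).disjoint_of_ne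
      (Submodule.isAtom_iff_finrank_eq_one.mpr hrF) hne
  have hrC : LinearMap.range (C : H →ₗ[ℂ] H) = ⊥ :=
    disjoint_self.mp (hEF.mono (hC.1.range_le_range_of_le hCE) (hC.1.range_le_range_of_le hCF))
  exact ContinuousLinearMap.coe_injective (LinearMap.range_eq_bot.mp hrC)

/-- If an effect `C` is dominated by two rank-one effects with distinct
one-dimensional ranges, then `C = 0`. -/
theorem effect_le_two_rankOne_eq_zero (C E F : H →L[ℂ] H)
    (hC : IsEffect C) (hE : IsEffect E) (hF : IsEffect F)
    (hCE : (E - C).IsPositive) (hCF : (F - C).IsPositive)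
    (hrE : Module.finrank ℂ (LinearMap.range (E : H →ₗ[ℂ] H)) = 1)
    (hrF : Module.finrank ℂ (LinearMap.range (F : H →ₗ[ℂ] H)) = 1)
    (hne : LinearMap.range (E : H →ₗ[ℂ] H) ≠ LinearMap.range (F : H →ₗ[ℂ] H)) :
    C = 0 :=
  effect_le_two_rankOne_eq_zero_general C E F hC hCE hCF hrE hrF hne
end

section
/- Let E be an effect on a Hilbert space H with λI ≤ E ≤ μI where 0 < λ < μ ≤ 1. If φ is a unit vector with strength λ(E, P_φ) = λ, then λ is in the spectrum of E (i.e., E − λI is not invertible). -/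
/-!
Since `λ • 1 ≤ E`, the spectrum of `E` lies in `[λ, ∞)`. If `λ` were not in it, closedness of
the spectrum would give `s > λ` with `σ(E) ⊆ [s, ∞)`, i.e. `s • 1 ≤ E`. As `P_φ ≤ 1`, every
`t ∈ (λ, min s 1]` then satisfies `t • P_φ ≤ E`, so the strength would exceed `λ`.
-/

variable {H : Type*} [NormedAddCommGroup H] [InnerProductSpace ℂ H] [CompleteSpace H]

/-- The rank-one projection onto the span of a unit vector `φ`. -/
noncomputable def projLine (φ : H) : H →L[ℂ] H := (innerSL ℂ φ).smulRight φ

/-- The strength of an effect `E` along the ray determined by a unit vector `φ`: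
`λ(E, P_φ) = sup { t ∈ [0,1] : t • P_φ ≤ E }`. -/
noncomputable def strength (E : H →L[ℂ] H) (φ : H) : ℝ :=
  sSup {t : ℝ | t ∈ Set.Icc (0:ℝ) 1 ∧ (E - (t : ℂ) • projLine φ).IsPositive}

lemma exists_lt_algebraMap_le_of_notMem_spectrum {A : Type*} [CStarAlgebra A] [PartialOrder A]
    [StarOrderedRing A] {a : A} {r : ℝ} (hra : algebraMap ℝ A r ≤ a)
    (hr : r ∉ spectrum ℝ a) : ∃ s, r < s ∧ algebraMap ℝ A s ≤ a := by
  have ha : IsSelfAdjoint a := by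
    simpa using (IsSelfAdjoint.of_nonneg (sub_nonneg.2 hra)).add (.algebraMap A (.all r))
  obtain ⟨ε, hε, hball⟩ := Metric.isOpen_iff.1 (spectrum.isClosed a).isOpen_compl r hr
  refine ⟨r + ε, by linarith, (algebraMap_le_iff_le_spectrum ha).2 fun x hx => ?_⟩
  have hrx : r ≤ x := (algebraMap_le_iff_le_spectrum ha).1 hra x hx
  by_contra! hxε
  exact hball (by rw [Metric.mem_ball, Real.dist_eq, abs_lt]; constructor <;> linarith) hx

lemma projLine_le_one {φ : H} (hφ : ‖φ‖ = 1) : projLine φ ≤ 1 := by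
  have hrankOne : projLine φ = InnerProductSpace.rankOne ℂ φ φ := by
    ext; simp [projLine, InnerProductSpace.rankOne_apply]
  exact hrankOne ▸ (InnerProductSpace.isStarProjection_rankOne_self hφ).le_one

omit [CompleteSpace H] in
lemma le_strength {E : H →L[ℂ] H} {φ : H} {t : ℝ} (ht : t ∈ Set.Icc (0 : ℝ) 1)
    (htE : t • projLine φ ≤ E) : t ≤ strength E φ :=
  le_csSup ⟨1, fun _ hs => hs.1.2⟩ ⟨ht, by rwa [Complex.coe_smul]⟩

theorem strength_mem_spectrum_general (E : H →L[ℂ] H)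
    (l m : ℝ) (hl : 0 < l) (hlm : l < m) (hm : m ≤ 1)
    (hlE : (E - (l : ℂ) • (1 : H →L[ℂ] H)).IsPositive)
    (φ : H) (hφ : ‖φ‖ = 1) (hsφ : strength E φ = l) :
    (l : ℂ) ∈ spectrum ℂ E := by
  rw [← Complex.coe_algebraMap, spectrum.algebraMap_mem_iff]
  by_contra hlσ
  have hlE' : algebraMap ℝ (H →L[ℂ] H) l ≤ E := by
    rwa [Algebra.algebraMap_eq_smul_one, ContinuousLinearMap.le_def, ← Complex.coe_smul]
  obtain ⟨s, hls, hsE⟩ := exists_lt_algebraMap_le_of_notMem_spectrum hlE' hlσ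
  have hlt : l < min s 1 := lt_min hls (hlm.trans_le hm)
  have htE : min s 1 • projLine φ ≤ E := calc
    min s 1 • projLine φ ≤ min s 1 • (1 : H →L[ℂ] H) :=
      smul_le_smul_of_nonneg_left (projLine_le_one hφ) (hl.trans hlt).le
    _ ≤ algebraMap ℝ (H →L[ℂ] H) s := by
      rw [Algebra.algebraMap_eq_smul_one]
      exact smul_le_smul_of_nonneg_right (min_le_left s 1) zero_le_one
    _ ≤ E := hsE
  have := le_strength ⟨(hl.trans hlt).le, min_le_right s 1⟩ htE
  linarith

/-- If `λ I ≤ E ≤ μ I` with `0 < λ < μ ≤ 1` and the strength of `E` along a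
unit vector `φ` is `λ`, then `λ` belongs to the spectrum of `E`. -/
theorem strength_mem_spectrum (E : H →L[ℂ] H) (hE : IsEffect E)
    (l m : ℝ) (hl : 0 < l) (hlm : l < m) (hm : m ≤ 1)
    (hlE : (E - (l : ℂ) • (1 : H →L[ℂ] H)).IsPositive)
    (hEm : ((m : ℂ) • (1 : H →L[ℂ] H) - E).IsPositive)
    (φ : H) (hφ : ‖φ‖ = 1) (hsφ : strength E φ = l) :
    (l : ℂ) ∈ spectrum ℂ E :=
  strength_mem_spectrum_general E l m hl hlm hm hlE φ hφ hsφ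
end
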